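/- arXiv:2503.24022 — 4 statements merged into one kernel-verified Lean document; each statement's English description precedes it below -/
import Mathlib

section
/- Let A ∈ ℝ^{n×n} be symmetric and b, x₀ ∈ ℝⁿ. Then the unique solution of the linear ODE ẋ(t) = A x(t) + b with x(0) = x₀ is given for all t ∈ ℝ by x(t) = e^{At}(x₀ + A⁺ b) + t P_A b − A⁺ b. -/
open Matrix MeasureTheory ProbabilityTheory
open scoped Classical

noncomputable section

/-- Moore–Penrose pseudoinverse `A⁺` of a real square matrix: the unique `B` with
`A B A = A`, `B A B = B`, and `A B`, `B A` symmetric. -/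
def pinv {n : ℕ} (A : Matrix (Fin n) (Fin n) ℝ) : Matrix (Fin n) (Fin n) ℝ :=
  if h : ∃ B : Matrix (Fin n) (Fin n) ℝ,
      A * B * A = A ∧ B * A * B = B ∧ (A * B)ᵀ = A * B ∧ (B * A)ᵀ = B * A
  then h.choose else 0

/-- `P_A = I - A A⁺`, the orthogonal projection onto the null space of `A`. -/
def nullProj {n : ℕ} (A : Matrix (Fin n) (Fin n) ℝ) : Matrix (Fin n) (Fin n) ℝ :=
  1 - A * pinv A

/-- The matrix exponential `e^A`. -/
def mexp {n : ℕ} (A : Matrix (Fin n) (Fin n) ℝ) : Matrix (Fin n) (Fin n) ℝ :=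
  NormedSpace.exp A

/-- The (symmetric) positive semidefinite square root of a positive semidefinite matrix
(junk value `0` if no such root exists). -/
def msqrt {n : ℕ} (S : Matrix (Fin n) (Fin n) ℝ) : Matrix (Fin n) (Fin n) ℝ :=
  if h : ∃ B : Matrix (Fin n) (Fin n) ℝ, B.PosSemidef ∧ B * B = S then h.choose else 0

/-- The matrix logarithm of a symmetric positive definite matrix: the unique symmetric `A`
with `e^A = S` (junk value `0` if no such `A` exists). -/
def matLog {n : ℕ} (S : Matrix (Fin n) (Fin n) ℝ) : Matrix (Fin n) (Fin n) ℝ :=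
  if h : ∃ A : Matrix (Fin n) (Fin n) ℝ, A.IsSymm ∧ mexp A = S then h.choose else 0

/-- The quadratic potential `f(x) = ½ xᵀ A x + bᵀ x`. -/
def quadf {n : ℕ} (A : Matrix (Fin n) (Fin n) ℝ) (b x : Fin n → ℝ) : ℝ :=
  (1 / 2) * (x ⬝ᵥ (A *ᵥ x)) + b ⬝ᵥ x

/-- Squared Euclidean norm `‖v‖²` on `ℝⁿ`. -/
def sqNorm {n : ℕ} (v : Fin n → ℝ) : ℝ := ∑ i, (v i) ^ 2

/-- Squared Frobenius norm `‖M‖_F²`. -/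
def frobSq {n : ℕ} (M : Matrix (Fin n) (Fin n) ℝ) : ℝ := ∑ i, ∑ j, (M i j) ^ 2

/-- The flow map `φ : (t, x₀) ↦ x(t)` of the ODE `ẋ = A x + b`, `x(0) = x₀`. -/
def flowMap {n : ℕ} (A : Matrix (Fin n) (Fin n) ℝ) (b : Fin n → ℝ) :
    ℝ → (Fin n → ℝ) → (Fin n → ℝ) :=
  if h : ∃ φ : ℝ → (Fin n → ℝ) → (Fin n → ℝ),
      (∀ x₀, φ 0 x₀ = x₀) ∧ ∀ x₀ t, HasDerivAt (fun s => φ s x₀) (A *ᵥ (φ t x₀) + b) t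
  then h.choose else fun _ x => x

/-- The standard Gaussian measure on `ℝⁿ`. -/
def stdGaussianPi (n : ℕ) : Measure (Fin n → ℝ) :=
  Measure.pi fun _ => gaussianReal 0 1

/-- The multivariate Gaussian measure `N(μ, Σ)` on `ℝⁿ` (for `Σ` positive semidefinite),
realized as the pushforward of the standard Gaussian by `x ↦ μ + √Σ x`. -/
def multiGaussian {n : ℕ} (μ : Fin n → ℝ) (S : Matrix (Fin n) (Fin n) ℝ) :
    Measure (Fin n → ℝ) :=
  (stdGaussianPi n).map (fun x => μ + (msqrt S) *ᵥ x)

/-- The Wasserstein KL-divergence `D_WKL(μ‖ν)`: for the quadratic potential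
`f(x) = ½ xᵀ A x + bᵀ x` (`A` symmetric) whose gradient flow `φ` pushes `μ` forward to `ν`
at time 1, it is `∫ ∫₀¹ (f(φ₁ x) - f(φ_t x)) dt dμ(x)` (junk value `0` if no such `f`). -/
def DWKL {n : ℕ} (μ ν : Measure (Fin n → ℝ)) : ℝ :=
  if h : ∃ p : Matrix (Fin n) (Fin n) ℝ × (Fin n → ℝ),
      p.1.IsSymm ∧ μ.map (flowMap p.1 p.2 1) = ν then
    ∫ x, (∫ t in (0:ℝ)..1,
        (quadf h.choose.1 h.choose.2 (flowMap h.choose.1 h.choose.2 1 x)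
          - quadf h.choose.1 h.choose.2 (flowMap h.choose.1 h.choose.2 t x))) ∂μ
  else 0

/-- The flow map of the one-dimensional ODE `ẋ = a x + b`. -/
def flow1 (a b : ℝ) : ℝ → ℝ → ℝ :=
  if h : ∃ φ : ℝ → ℝ → ℝ,
      (∀ x₀, φ 0 x₀ = x₀) ∧ ∀ x₀ t, HasDerivAt (fun s => φ s x₀) (a * φ t x₀ + b) t
  then h.choose else fun _ x => x

/-- The quadratic potential `f(x) = ½ a x² + b x` on `ℝ`. -/
def quad1 (a b x : ℝ) : ℝ := (1 / 2) * a * x ^ 2 + b * x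

/-- The Wasserstein KL-divergence for measures on `ℝ`. -/
def DWKL1 (μ ν : Measure ℝ) : ℝ :=
  if h : ∃ p : ℝ × ℝ, μ.map (flow1 p.1 p.2 1) = ν then
    ∫ x, (∫ t in (0:ℝ)..1,
        (quad1 h.choose.1 h.choose.2 (flow1 h.choose.1 h.choose.2 1 x)
          - quad1 h.choose.1 h.choose.2 (flow1 h.choose.1 h.choose.2 t x))) ∂μ
  else 0

end

/-! `A` is orthogonally diagonalizable, so inverting its nonzero eigenvalues gives `A⁺`, and the
symmetry of `A` turns the Penrose identities into `A A A⁺ = A`, i.e. `A P_A = 0`. Hence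
`b = A (A⁺ b) + P_A b` splits into a part absorbed by the shift `x ↦ x + A⁺ b` and a part in the
kernel of `A` that only produces a linear drift; this makes the formula a solution. It is the only
one because the vector field `x ↦ A x + b` is Lipschitz. -/

section MoorePenrose

variable {R : Type*} [Mul R] [Star R]

def IsMoorePenroseInverse (a b : R) : Prop :=
  a * b * a = a ∧ b * a * b = b ∧ star (a * b) = a * b ∧ star (b * a) = b * a

theorem IsMoorePenroseInverse.map {S F : Type*} [Mul S] [Star S] [FunLike F R S]
    [MulHomClass F R S] [StarHomClass F R S] (f : F) {a b : R}
    (h : IsMoorePenroseInverse a b) : IsMoorePenroseInverse (f a) (f b) := by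
  obtain ⟨h₁, h₂, h₃, h₄⟩ := h
  refine ⟨?_, ?_, ?_, ?_⟩ <;> simp only [← map_mul, ← map_star, h₁, h₂, h₃, h₄]

theorem IsMoorePenroseInverse.mul_mul_eq_self {R : Type*} [Semigroup R] [StarMul R] {a b : R}
    (h : IsMoorePenroseInverse a b) (ha : IsSelfAdjoint a) : a * (a * b) = a :=
  calc a * (a * b) = a * star (a * b) := by rw [h.2.2.1]
    _ = star (a * b * a) := by rw [star_mul (a * b) a, ha.star_eq]
    _ = a := by rw [h.1, ha.star_eq]

end MoorePenrose

namespace Matrix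

variable {m : Type*} [Fintype m]

theorem lipschitzWith_mulVec_add (A : Matrix m m ℝ) (b : m → ℝ) :
    ∃ K, LipschitzWith K fun z => A *ᵥ z + b :=
  ⟨_, (LinearMap.toContinuousLinearMap (mulVecLin A)).lipschitz.add (LipschitzWith.const b)⟩

variable [DecidableEq m]

/-- On a zero diagonal entry the junk value `0⁻¹ = 0` is exactly what the pseudoinverse needs. -/
theorem isMoorePenroseInverse_diagonal_inv {K : Type*} [Field K] [StarRing K] {d : m → K}
    (hd : ∀ i, IsSelfAdjoint (d i)) : IsMoorePenroseInverse (diagonal d) (diagonal d⁻¹) := by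
  refine ⟨?_, ?_, ?_, ?_⟩ <;>
    simp only [diagonal_mul_diagonal, star_eq_conjTranspose, diagonal_conjTranspose] <;>
    congr 1 <;> funext i
  · exact mul_inv_mul_cancel (d i)
  · simpa using mul_inv_mul_cancel (d i)⁻¹
  all_goals simp [(hd i).star_eq, mul_comm]

theorem IsHermitian.exists_isMoorePenroseInverse {𝕜 : Type*} [RCLike 𝕜] {A : Matrix m m 𝕜}
    (hA : A.IsHermitian) : ∃ B, IsMoorePenroseInverse A B := by
  have := (isMoorePenroseInverse_diagonal_inv (d := RCLike.ofReal ∘ hA.eigenvalues)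
    fun i => RCLike.conj_ofReal _).map (Unitary.conjStarAlgAut 𝕜 _ hA.eigenvectorUnitary)
  rw [← hA.spectral_theorem] at this
  exact ⟨_, this⟩

section Exponential

attribute [local instance] Matrix.linftyOpNormedRing Matrix.linftyOpNormedAlgebra

theorem hasDerivAt_exp_smul_mulVec {𝕂 : Type*} [RCLike 𝕂] (A : Matrix m m 𝕂) (v : m → 𝕂)
    (t : 𝕂) :
    HasDerivAt (fun s : 𝕂 => NormedSpace.exp (s • A) *ᵥ v)
      (A *ᵥ (NormedSpace.exp (t • A) *ᵥ v)) t := by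
  let applyTo : Matrix m m 𝕂 →L[𝕂] m → 𝕂 :=
    LinearMap.toContinuousLinearMap ((mulVecBilin 𝕂 𝕂).flip v)
  exact (applyTo.hasFDerivAt.comp_hasDerivAt t (hasDerivAt_exp_smul_const' A t)).congr_deriv
    (mulVec_mulVec _ _ _).symm

end Exponential

end Matrix

theorem isMoorePenroseInverse_pinv {n : ℕ} {A : Matrix (Fin n) (Fin n) ℝ} (hA : A.IsSymm) :
    IsMoorePenroseInverse A (pinv A) := by
  have hex := (isHermitian_iff_isSymm.mpr hA).exists_isMoorePenroseInverse
  simp only [IsMoorePenroseInverse, star_eq_conjTranspose,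
    conjTranspose_eq_transpose_of_trivial] at hex ⊢
  rw [pinv, dif_pos hex]
  exact hex.choose_spec

theorem mul_nullProj {n : ℕ} {A : Matrix (Fin n) (Fin n) ℝ} (hA : A.IsSymm) :
    A * nullProj A = 0 := by
  rw [nullProj, Matrix.mul_sub, Matrix.mul_one, (isMoorePenroseInverse_pinv hA).mul_mul_eq_self
    (isHermitian_iff_isSymm.mpr hA).isSelfAdjoint, sub_self]

theorem hasDerivAt_mexp_smul_mulVec_add_smul_sub {n : ℕ} {A : Matrix (Fin n) (Fin n) ℝ}
    {b w u : Fin n → ℝ} (v : Fin n → ℝ) (hw : A *ᵥ w = 0) (hu : b - A *ᵥ u = w) (t : ℝ) :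
    HasDerivAt (fun s : ℝ => mexp (s • A) *ᵥ v + s • w - u)
      (A *ᵥ (mexp (t • A) *ᵥ v + t • w - u) + b) t := by
  refine (((hasDerivAt_exp_smul_mulVec A v t).add
    ((hasDerivAt_id t).smul_const w)).sub_const u).congr_deriv ?_
  rw [mulVec_sub, mulVec_add, mulVec_smul, hw, ← hu, smul_zero, one_smul, mexp]
  abel

theorem hasDerivAt_iff_eq_of_lipschitzWith {E : Type*} [NormedAddCommGroup E]
    [NormedSpace ℝ E] {K : NNReal} {v : E → E} (hv : LipschitzWith K v) {y : ℝ → E}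
    (hy : ∀ t, HasDerivAt y (v (y t)) t) (x : ℝ → E) :
    (x 0 = y 0 ∧ ∀ t, HasDerivAt x (v (x t)) t) ↔ x = y := by
  refine ⟨fun ⟨h₀, hx⟩ => ?_, by rintro rfl; exact ⟨rfl, hy⟩⟩
  exact ODE_solution_unique_univ (v := fun _ => v) (s := fun _ => Set.univ)
    (fun _ => hv.lipschitzOnWith) (fun t => ⟨hx t, trivial⟩) (fun t => ⟨hy t, trivial⟩) h₀

/-- The unique solution of `ẋ = A x + b`, `x(0) = x₀` (`A` symmetric) is
`x(t) = e^{At}(x₀ + A⁺b) + t P_A b − A⁺ b`. -/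
theorem stmt0 {n : ℕ} (A : Matrix (Fin n) (Fin n) ℝ) (hA : A.IsSymm)
    (b x₀ : Fin n → ℝ) (x : ℝ → (Fin n → ℝ)) :
    (x 0 = x₀ ∧ ∀ t : ℝ, HasDerivAt x (A *ᵥ x t + b) t) ↔
      ∀ t : ℝ, x t = mexp (t • A) *ᵥ (x₀ + pinv A *ᵥ b) + t • (nullProj A *ᵥ b) - pinv A *ᵥ b := by
  have hdrift : b - A *ᵥ (pinv A *ᵥ b) = nullProj A *ᵥ b := by
    rw [nullProj, sub_mulVec, one_mulVec, mulVec_mulVec]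
  have hsol := hasDerivAt_mexp_smul_mulVec_add_smul_sub (x₀ + pinv A *ᵥ b)
    (by rw [mulVec_mulVec, mul_nullProj hA, zero_mulVec]) hdrift
  have hinit : mexp ((0 : ℝ) • A) *ᵥ (x₀ + pinv A *ᵥ b) + (0 : ℝ) • (nullProj A *ᵥ b)
      - pinv A *ᵥ b = x₀ := by
    simp [mexp]
  obtain ⟨K, hK⟩ := lipschitzWith_mulVec_add A b
  rw [← funext_iff, ← hasDerivAt_iff_eq_of_lipschitzWith hK hsol, hinit]
end

section
/- For every symmetric matrix A ∈ ℝ^{n×n}, the matrix M = 2A e^{2A} − e^{2A} + I is symmetric positive semidefinite. -/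
open Matrix MeasureTheory ProbabilityTheory
open scoped Classical

/-! By the continuous functional calculus, the scalar inequality `eˣ - 1 ≤ x eˣ` (a rewriting of
`1 - x ≤ e⁻ˣ`) lifts to `e^B - 1 ≤ B e^B` in the Loewner order for every self-adjoint `B`.
Taking `B = 2A` gives `M = B e^B - (e^B - 1) ≥ 0`. -/

theorem Real.exp_sub_one_le_mul_exp (x : ℝ) : Real.exp x - 1 ≤ x * Real.exp x := by
  have h := mul_le_mul_of_nonneg_right (Real.one_sub_le_exp_neg x) (Real.exp_pos x).le
  rwa [← Real.exp_add, neg_add_cancel, Real.exp_zero, sub_mul, one_mul, sub_le_comm] at h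

theorem IsSelfAdjoint.exp_sub_one_le_mul_exp {A : Type*} [NormedRing A] [StarRing A]
    [NormedAlgebra ℝ A] [PartialOrder A] [StarOrderedRing A]
    [ContinuousFunctionalCalculus ℝ A IsSelfAdjoint] {a : A} (ha : IsSelfAdjoint a) :
    NormedSpace.exp a - 1 ≤ a * NormedSpace.exp a := by
  have h := cfc_mono (a := a) fun x _ => Real.exp_sub_one_le_mul_exp x
  rwa [cfc_sub Real.exp (fun _ => 1) a, cfc_mul (fun x => x) Real.exp a, cfc_id' ℝ a,
    cfc_const_one ℝ a, CFC.real_exp_eq_normedSpace_exp] at h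

-- The L2 operator norm only serves to make matrices a C⋆-algebra; `mexp` depends on the
-- topology alone, which this norm does not change.
open scoped MatrixOrder Matrix.Norms.L2Operator

/-- For symmetric `A`, the matrix `M = 2A e^{2A} − e^{2A} + I` is
symmetric positive semidefinite. -/
theorem stmt3 {n : ℕ} (A : Matrix (Fin n) (Fin n) ℝ) (hA : A.IsSymm) :
    ((2 : ℝ) • (A * mexp ((2 : ℝ) • A)) - mexp ((2 : ℝ) • A) + 1).PosSemidef := by
  have h2A : IsSelfAdjoint ((2 : ℝ) • A) :=
    (IsSelfAdjoint.all 2).smul (isHermitian_iff_isSymm.mpr hA)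
  rw [← nonneg_iff_posSemidef, ← smul_mul_assoc, sub_add, sub_nonneg]
  exact h2A.exp_sub_one_le_mul_exp
end

section
/- Let Σ₀, Σ₁ ∈ ℝ^{n×n} be symmetric positive definite. Then X = Σ₀^{-1/2} (Σ₀^{1/2} Σ₁ Σ₀^{1/2})^{1/2} Σ₀^{-1/2} is the unique symmetric positive definite solution of the matrix equation X Σ₀ X = Σ₁. -/
/-!
With `A = Σ₀^{1/2}`, conjugation `Y ↦ A Y A` is a bijection of positive definite matrices
that turns `Y Σ₀ Y = Σ₁` into `(A Y A)² = A Σ₁ A`. By uniqueness of positive square roots,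
the solutions are exactly the `Y` with `A Y A = (A Σ₁ A)^{1/2}`, i.e. `Y = A⁻¹ (A Σ₁ A)^{1/2} A⁻¹`.
-/

open Matrix MeasureTheory ProbabilityTheory
open scoped Classical

open scoped MatrixOrder ComplexOrder

namespace Matrix

section Conjugation

variable {ι 𝕜 : Type*} [Fintype ι] [DecidableEq ι]

theorem mul_mul_eq_iff_eq_inv_mul_mul_inv [CommRing 𝕜] {A Y B : Matrix ι ι 𝕜} (hA : IsUnit A) :
    A * Y * A = B ↔ Y = A⁻¹ * B * A⁻¹ := by
  have hdet : IsUnit A.det := (isUnit_iff_isUnit_det A).mp hA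
  constructor
  · rintro rfl
    simp [Matrix.mul_assoc, hdet]
  · rintro rfl
    simp [← Matrix.mul_assoc, hdet]

theorem mul_mul_self_mul_eq_iff [CommRing 𝕜] {A Y S : Matrix ι ι 𝕜} (hA : IsUnit A) :
    Y * (A * A) * Y = S ↔ A * Y * A * (A * Y * A) = A * S * A := by
  have hconj : A * Y * A * (A * Y * A) = A * (Y * (A * A) * Y) * A := by
    simp only [Matrix.mul_assoc]
  rw [hconj, mul_mul_eq_iff_eq_inv_mul_mul_inv hA]
  simp [Matrix.mul_assoc, (isUnit_iff_isUnit_det A).mp hA]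

theorem PosDef.mul_mul_same_of_isHermitian [RCLike 𝕜] {B C : Matrix ι ι 𝕜} (hB : B.PosDef)
    (hC : C.IsHermitian) (hCu : IsUnit C) : (C * B * C).PosDef := by
  simpa [hC.eq] using hB.conjTranspose_mul_mul_same (mulVec_injective_iff_isUnit.mpr hCu)

end Conjugation

variable {n : ℕ} {S B : Matrix (Fin n) (Fin n) ℝ}

theorem msqrt_eq_cfcSqrt (hS : S.PosSemidef) : msqrt S = CFC.sqrt S := by
  have hex : ∃ B : Matrix (Fin n) (Fin n) ℝ, B.PosSemidef ∧ B * B = S :=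
    ⟨CFC.sqrt S, (CFC.sqrt_nonneg S).posSemidef, CFC.sqrt_mul_sqrt_self S hS.nonneg⟩
  obtain ⟨hpsd, hsq⟩ := hex.choose_spec
  rw [msqrt, dif_pos hex]
  exact (CFC.sqrt_unique hsq hpsd.nonneg).symm

theorem msqrt_mul_msqrt (hS : S.PosSemidef) : msqrt S * msqrt S = S := by
  rw [msqrt_eq_cfcSqrt hS]
  exact CFC.sqrt_mul_sqrt_self S hS.nonneg

theorem PosDef.msqrt (hS : S.PosDef) : (msqrt S).PosDef := by
  rw [msqrt_eq_cfcSqrt hS.posSemidef]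
  exact hS.isStrictlyPositive.sqrt.posDef

theorem eq_msqrt_of_mul_self_eq (hB : B.PosSemidef) (h : B * B = S) : B = msqrt S := by
  have hS : S.PosSemidef := by
    have := posSemidef_conjTranspose_mul_self B
    rwa [hB.1.eq, h] at this
  rw [msqrt_eq_cfcSqrt hS]
  exact (CFC.sqrt_unique h hB.nonneg).symm

end Matrix

open Matrix

/-- `X = Σ₀^{-1/2}(Σ₀^{1/2} Σ₁ Σ₀^{1/2})^{1/2} Σ₀^{-1/2}` is the unique
symmetric positive definite solution of `X Σ₀ X = Σ₁`. -/
theorem stmt5 {n : ℕ} (S₀ S₁ : Matrix (Fin n) (Fin n) ℝ) (h₀ : S₀.PosDef) (h₁ : S₁.PosDef)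
    (X : Matrix (Fin n) (Fin n) ℝ)
    (hX : X = (msqrt S₀)⁻¹ * msqrt (msqrt S₀ * S₁ * msqrt S₀) * (msqrt S₀)⁻¹) :
    X.PosDef ∧ X * S₀ * X = S₁ ∧
      ∀ Y : Matrix (Fin n) (Fin n) ℝ, Y.PosDef → Y * S₀ * Y = S₁ → Y = X := by
  set A := msqrt S₀
  have hA : A.PosDef := h₀.msqrt
  have hAu : IsUnit A := hA.isUnit
  have hAA : A * A = S₀ := msqrt_mul_msqrt h₀.posSemidef
  have hM : (A * S₁ * A).PosDef := h₁.mul_mul_same_of_isHermitian hA.1 hAu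
  set B := msqrt (A * S₁ * A)
  have hsol (Y : Matrix (Fin n) (Fin n) ℝ) :
      Y * S₀ * Y = S₁ ↔ A * Y * A * (A * Y * A) = A * S₁ * A :=
    hAA ▸ mul_mul_self_mul_eq_iff hAu
  have hAXA : A * X * A = B := (mul_mul_eq_iff_eq_inv_mul_mul_inv hAu).2 hX
  refine ⟨?_, (hsol X).2 (hAXA ▸ msqrt_mul_msqrt hM.posSemidef), fun Y hY hYS => ?_⟩
  · rw [hX]
    exact hM.msqrt.mul_mul_same_of_isHermitian hA.1.inv (isUnit_nonsing_inv_iff.mpr hAu)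
  · rw [hX, ← mul_mul_eq_iff_eq_inv_mul_mul_inv hAu]
    exact eq_msqrt_of_mul_self_eq (hY.mul_mul_same_of_isHermitian hA.1 hAu).posSemidef
      ((hsol Y).1 hYS)
end

section
/- (Corollary 1, unequal variances) Let μ = N(μ₀, σ₀²) and ν = N(μ₁, σ₁²) be univariate Gaussian measures on ℝ with σ₀ > 0, σ₁ > 0 and σ₀ ≠ σ₁. Then D_WKL(μ ∥ ν) = [ (σ₀² − σ₁² + σ₁² log(σ₁²/σ₀²)) / (4 (σ₁ − σ₀)²) ] · ( (σ₁ − σ₀)² + (μ₁ − μ₀)² ). -/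
open Matrix MeasureTheory ProbabilityTheory
open scoped Classical

/-! The gradient flow of `f x = ½ a x² + b x` is the affine map
`φ_t x = e^{a t} (x + b/a) - b/a` (for `a ≠ 0`), which pushes `N(m, v)` forward to
`N(e^a (m + b/a) - b/a, e^{2a} v)`. Matching `N(μ₁, σ₁²)` forces `a ≠ 0` (as `σ₀ ≠ σ₁`),
`e^a = σ₁ / σ₀` and pins down `b`, so every parameter pair the definition may choose gives the
same value. Completing the square, `f (φ_t x) = (a/2) e^{2at} (x + b/a)² - b²/(2a)`, so the time
integral is `(a e^{2a}/2 - (e^{2a} - 1)/4) (x + b/a)²`, and integrating in `x` only needs the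
second moment of a Gaussian. -/

open MeasureTheory ProbabilityTheory Real
open scoped NNReal

lemma flow1_eq_of_hasDerivAt {a b : ℝ} {φ : ℝ → ℝ → ℝ} (hφ₀ : ∀ x, φ 0 x = x)
    (hφ : ∀ x t, HasDerivAt (fun s => φ s x) (a * φ t x + b) t) : flow1 a b = φ := by
  have hex : ∃ ψ : ℝ → ℝ → ℝ,
      (∀ x, ψ 0 x = x) ∧ ∀ x t, HasDerivAt (fun s => ψ s x) (a * ψ t x + b) t :=
    ⟨φ, hφ₀, hφ⟩
  obtain ⟨hψ₀, hψ⟩ := hex.choose_spec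
  have hlip : LipschitzWith ‖a‖₊ (fun y : ℝ => a * y + b) := by
    simpa using (lipschitzWith_smul a).add (LipschitzWith.const b)
  rw [flow1, dif_pos hex]
  funext t x
  exact congrFun (ODE_solution_unique_univ (v := fun _ y => a * y + b) (s := fun _ => Set.univ)
    (t₀ := 0) (fun _ => hlip.lipschitzOnWith) (fun s => ⟨hψ x s, trivial⟩)
    (fun s => ⟨hφ x s, trivial⟩) (by rw [hψ₀, hφ₀])) t

lemma flow1_apply_of_ne_zero {a : ℝ} (ha : a ≠ 0) (b t x : ℝ) :
    flow1 a b t x = exp (a * t) * (x + b / a) - b / a := by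
  refine congrFun (congrFun (flow1_eq_of_hasDerivAt
    (φ := fun t x => exp (a * t) * (x + b / a) - b / a) (by simp) fun x t => ?_) t) x
  have hd := (((hasDerivAt_id t).const_mul a).exp.mul_const (x + b / a)).sub_const (b / a)
  refine hd.congr_deriv ?_
  simp only [id_eq]
  field_simp
  ring

lemma flow1_zero_left (b t x : ℝ) : flow1 0 b t x = x + b * t := by
  refine congrFun (congrFun (flow1_eq_of_hasDerivAt (φ := fun t x => x + b * t)
    (by simp) fun x t => ?_) t) x
  simpa using ((hasDerivAt_id t).const_mul b).const_add x

lemma gaussianReal_map_affine (m : ℝ) (v : ℝ≥0) (c d : ℝ) :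
    (gaussianReal m v).map (fun x => c * x + d)
      = gaussianReal (c * m + d) (⟨c ^ 2, sq_nonneg c⟩ * v) := by
  have : (fun x : ℝ => c * x + d) = (· + d) ∘ (c * ·) := rfl
  rw [this, ← Measure.map_map (by fun_prop) (by fun_prop), gaussianReal_map_const_mul,
    gaussianReal_map_add_const]
  rfl

lemma integral_add_const_sq_gaussianReal (m : ℝ) (v : ℝ≥0) (c : ℝ) :
    ∫ x, (x + c) ^ 2 ∂gaussianReal m v = v + (m + c) ^ 2 := by
  rw [← integral_map (φ := (· + c)) (f := fun y => y ^ 2) (by fun_prop) (by fun_prop),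
    gaussianReal_map_add_const]
  have := variance_eq_sub (memLp_id_gaussianReal (μ := m + c) (v := v) 2)
  simp only [variance_id_gaussianReal, Pi.pow_apply, id_eq, integral_id_gaussianReal] at this
  linarith

lemma map_flow1_one_gaussianReal {a : ℝ} (ha : a ≠ 0) (b m : ℝ) (v : ℝ≥0) :
    (gaussianReal m v).map (flow1 a b 1)
      = gaussianReal (exp a * (m + b / a) - b / a) (⟨exp a ^ 2, sq_nonneg _⟩ * v) := by
  have : flow1 a b 1 = fun x => exp a * x + (exp a * (b / a) - b / a) := by
    funext x
    rw [flow1_apply_of_ne_zero ha, mul_one]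
    ring
  rw [this, gaussianReal_map_affine]
  congr 1
  ring

lemma flow1_params_of_map_gaussianReal {a b m₀ m₁ : ℝ} {v₀ v₁ : ℝ≥0} (hv : v₀ ≠ v₁)
    (h : (gaussianReal m₀ v₀).map (flow1 a b 1) = gaussianReal m₁ v₁) :
    a ≠ 0 ∧ exp a * (m₀ + b / a) - b / a = m₁ ∧ exp a ^ 2 * v₀ = v₁ := by
  have ha : a ≠ 0 := by
    rintro rfl
    have hflow : flow1 0 b 1 = (· + b) := by
      funext x
      rw [flow1_zero_left, mul_one]
    rw [hflow, gaussianReal_map_add_const, gaussianReal_ext_iff] at h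
    exact hv h.2
  rw [map_flow1_one_gaussianReal ha, gaussianReal_ext_iff] at h
  exact ⟨ha, h.1, congrArg NNReal.toReal h.2⟩

lemma exists_map_flow1_gaussianReal {v₀ v₁ : ℝ≥0} (h₀ : v₀ ≠ 0) (h₁ : v₁ ≠ 0) (hv : v₀ ≠ v₁)
    (m₀ m₁ : ℝ) : ∃ p : ℝ × ℝ, (gaussianReal m₀ v₀).map (flow1 p.1 p.2 1) = gaussianReal m₁ v₁ := by
  have hv₀ : (0 : ℝ) < v₀ := NNReal.coe_pos.mpr (pos_iff_ne_zero.mpr h₀)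
  have hv₁ : (0 : ℝ) < v₁ := NNReal.coe_pos.mpr (pos_iff_ne_zero.mpr h₁)
  set a := log (v₁ / v₀ : ℝ) / 2
  have hexp : exp a ^ 2 = v₁ / v₀ := by
    rw [← exp_nat_mul, Nat.cast_ofNat, mul_div_cancel₀ _ two_ne_zero, exp_log (by positivity)]
  have ha : a ≠ 0 := by
    refine div_ne_zero (log_ne_zero_of_pos_of_ne_one (by positivity) ?_) two_ne_zero
    rw [Ne, div_eq_one_iff_eq hv₀.ne', NNReal.coe_inj]
    exact hv.symm
  have hexp₁ : exp a - 1 ≠ 0 := sub_ne_zero.mpr (mt (exp_eq_one_iff a).mp ha)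
  refine ⟨(a, a * ((m₁ - exp a * m₀) / (exp a - 1))), ?_⟩
  rw [map_flow1_one_gaussianReal ha, gaussianReal_ext_iff]
  constructor
  · field_simp
    ring
  · ext
    change exp a ^ 2 * (v₀ : ℝ) = v₁
    rw [hexp]
    field_simp

lemma quad1_eq_of_ne_zero {a : ℝ} (ha : a ≠ 0) (b x : ℝ) :
    quad1 a b x = a / 2 * (x + b / a) ^ 2 - b ^ 2 / (2 * a) := by
  rw [quad1]
  field_simp
  ring

lemma integral_quad1_flow1_sub {a : ℝ} (ha : a ≠ 0) (b x : ℝ) :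
    ∫ t in (0 : ℝ)..1, (quad1 a b (flow1 a b 1 x) - quad1 a b (flow1 a b t x))
      = (a * exp (2 * a) / 2 - (exp (2 * a) - 1) / 4) * (x + b / a) ^ 2 := by
  have hquad : ∀ t, quad1 a b (flow1 a b t x)
      = a / 2 * (x + b / a) ^ 2 * exp (2 * a * t) - b ^ 2 / (2 * a) := by
    intro t
    rw [quad1_eq_of_ne_zero ha, flow1_apply_of_ne_zero ha, sub_add_cancel, mul_pow, ← exp_nat_mul]
    ring_nf
  have hdiff : ∀ t, quad1 a b (flow1 a b 1 x) - quad1 a b (flow1 a b t x)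
      = a / 2 * (x + b / a) ^ 2 * (exp (2 * a) - exp (2 * a * t)) := by
    intro t
    rw [hquad, hquad, mul_one]
    ring
  simp only [hdiff]
  rw [intervalIntegral.integral_const_mul, intervalIntegral.integral_sub intervalIntegrable_const
      ((by fun_prop : Continuous fun t => exp (2 * a * t)).intervalIntegrable 0 1),
    intervalIntegral.integral_comp_mul_left exp (by positivity), integral_exp,
    intervalIntegral.integral_const, smul_eq_mul, smul_eq_mul, mul_zero, mul_one, exp_zero]
  field_simp
  ring

lemma integral_integral_quad1_flow1_gaussianReal {a : ℝ} (ha : a ≠ 0) (b m : ℝ) (v : ℝ≥0) :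
    ∫ x, (∫ t in (0 : ℝ)..1, (quad1 a b (flow1 a b 1 x) - quad1 a b (flow1 a b t x)))
        ∂gaussianReal m v
      = (a * exp (2 * a) / 2 - (exp (2 * a) - 1) / 4) * (v + (m + b / a) ^ 2) := by
  simp_rw [integral_quad1_flow1_sub ha, integral_const_mul, integral_add_const_sq_gaussianReal]

lemma wkl_closed_form_of_flow1_params {a b μ₀ μ₁ σ₀ σ₁ : ℝ} (h₀ : 0 < σ₀) (h₁ : 0 < σ₁)
    (hne : σ₀ ≠ σ₁) (hmean : exp a * (μ₀ + b / a) - b / a = μ₁)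
    (hscale : exp a ^ 2 * σ₀ ^ 2 = σ₁ ^ 2) :
    (a * exp (2 * a) / 2 - (exp (2 * a) - 1) / 4) * (σ₀ ^ 2 + (μ₀ + b / a) ^ 2)
      = ((σ₀ ^ 2 - σ₁ ^ 2 + σ₁ ^ 2 * log (σ₁ ^ 2 / σ₀ ^ 2)) / (4 * (σ₁ - σ₀) ^ 2))
        * ((σ₁ - σ₀) ^ 2 + (μ₁ - μ₀) ^ 2) := by
  have hexp : exp a = σ₁ / σ₀ := by
    rw [← mul_pow, sq_eq_sq₀ (by positivity) h₁.le] at hscale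
    field_simp
    exact hscale
  have hexp₂ : exp (2 * a) = σ₁ ^ 2 / σ₀ ^ 2 := by
    rw [two_mul, exp_add, hexp]
    ring
  have hlog : log (σ₁ ^ 2 / σ₀ ^ 2) = 2 * a := by rw [← hexp₂, log_exp]
  have hσ : σ₁ - σ₀ ≠ 0 := sub_ne_zero.mpr hne.symm
  have hshift : μ₀ + b / a = σ₀ * (μ₁ - μ₀) / (σ₁ - σ₀) := by
    rw [hexp] at hmean
    generalize b / a = β at hmean ⊢
    field_simp at hmean ⊢
    linarith
  rw [hexp₂, hlog, hshift]
  field_simp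
  ring

/-- **Corollary 1, unequal variances.** -/
theorem stmt15 (μ₀ μ₁ σ₀ σ₁ : ℝ) (h₀ : 0 < σ₀) (h₁ : 0 < σ₁) (hne : σ₀ ≠ σ₁) :
    DWKL1 (gaussianReal μ₀ ⟨σ₀ ^ 2, sq_nonneg σ₀⟩) (gaussianReal μ₁ ⟨σ₁ ^ 2, sq_nonneg σ₁⟩) =
      ((σ₀ ^ 2 - σ₁ ^ 2 + σ₁ ^ 2 * Real.log (σ₁ ^ 2 / σ₀ ^ 2)) / (4 * (σ₁ - σ₀) ^ 2))
        * ((σ₁ - σ₀) ^ 2 + (μ₁ - μ₀) ^ 2) := by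
  have hv₀ : (⟨σ₀ ^ 2, sq_nonneg σ₀⟩ : ℝ≥0) ≠ 0 := fun h =>
    h₀.ne' ((pow_eq_zero_iff two_ne_zero).mp (congrArg NNReal.toReal h))
  have hv₁ : (⟨σ₁ ^ 2, sq_nonneg σ₁⟩ : ℝ≥0) ≠ 0 := fun h =>
    h₁.ne' ((pow_eq_zero_iff two_ne_zero).mp (congrArg NNReal.toReal h))
  have hvar : (⟨σ₀ ^ 2, sq_nonneg σ₀⟩ : ℝ≥0) ≠ ⟨σ₁ ^ 2, sq_nonneg σ₁⟩ := fun h =>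
    hne ((sq_eq_sq₀ h₀.le h₁.le).mp (congrArg NNReal.toReal h))
  have hex := exists_map_flow1_gaussianReal hv₀ hv₁ hvar μ₀ μ₁
  rw [DWKL1, dif_pos hex]
  obtain ⟨ha, hmean, hscale⟩ := flow1_params_of_map_gaussianReal hvar hex.choose_spec
  exact (integral_integral_quad1_flow1_gaussianReal ha _ μ₀ _).trans
    (wkl_closed_form_of_flow1_params h₀ h₁ hne hmean hscale)
end
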